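/- arXiv:1507.03623 — 5 statements merged into one kernel-verified Lean document; each statement's English description precedes it below -/
import Mathlib

section
/- Let J be a symbol set in ℤ/(2m+1) (so |J| = m, 0 ∉ J + J). Then 2m − 1 ≤ |J + J| ≤ 2m. The upper bound holds because J + J ⊆ ℤ/(2m+1) \ {0}, and the lower bound follows from Kneser's theorem together with the fact that J is not periodic. -/
open Finset Pointwise

/-- For a symbol set `J` in `ℤ/(2m+1)`, one has `2m − 1 ≤ |J + J| ≤ 2m`. -/
theorem stmt4 (m : ℕ) (hm : 0 < m) (J : Finset (ZMod (2*m+1)))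
    (hcard : J.card = m) (h0 : (0 : ZMod (2*m+1)) ∉ J)
    (hneg : ∀ j ∈ J, -j ∉ J) :
    2*m - 1 ≤ (J + J).card ∧ (J + J).card ≤ 2*m := by
  haveI : NeZero (2*m+1) := ⟨by omega⟩
  have hfin : Fintype.card (ZMod (2*m+1)) = 2*m+1 := ZMod.card _
  -- complement of J ∪ {0} is -J
  have hcomp : ∀ x : ZMod (2*m+1), x ≠ 0 → x ∉ J → -x ∈ J := by
    intro x hx0 hxJ
    by_contra hnx
    set K : Finset (ZMod (2*m+1)) := insert 0 (J ∪ J.image (fun a => -a)) with hK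
    have h0img : (0 : ZMod (2*m+1)) ∉ J ∪ J.image (fun a => -a) := by
      simp only [Finset.mem_union, Finset.mem_image]
      rintro (h | ⟨b, hb, hb0⟩)
      · exact h0 h
      · have : b = 0 := by simpa using congrArg Neg.neg hb0
        exact h0 (this ▸ hb)
    have hdisj : Disjoint J (J.image (fun a => -a)) := by
      rw [Finset.disjoint_left]
      intro a haJ haI
      obtain ⟨b, hbJ, hb⟩ := Finset.mem_image.1 haI
      exact hneg b hbJ (hb ▸ haJ)
    have hKcard : K.card = 2*m+1 := by
      rw [hK, Finset.card_insert_of_notMem h0img, Finset.card_union_of_disjoint hdisj,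
        Finset.card_image_of_injective _ neg_injective, hcard]
      omega
    have hKuniv : K = Finset.univ := Finset.eq_univ_of_card _ (by rw [hKcard, hfin])
    have hx : x ∈ K := hKuniv ▸ Finset.mem_univ x
    rw [hK] at hx
    simp only [Finset.mem_insert, Finset.mem_union, Finset.mem_image] at hx
    rcases hx with h | h | ⟨b, hb, hbx⟩
    · exact hx0 h
    · exact hxJ h
    · exact hnx (by rw [← hbx, neg_neg]; exact hb)
  -- 0 is not a sum
  have hJJ0 : (0 : ZMod (2*m+1)) ∉ J + J := by
    intro h
    obtain ⟨a, ha, b, hb, hab⟩ := Finset.mem_add.1 h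
    have : b = -a := by linear_combination hab
    exact hneg a ha (this ▸ hb)
  -- any nonzero missing element lies in J
  have hmem : ∀ c : ZMod (2*m+1), c ≠ 0 → c ∉ J + J → c ∈ J := by
    intro c hc0 hcJJ
    by_contra hcJ
    have step1 : ∀ j ∈ J, j - c ∈ J := by
      intro j hj
      have h1 : j - c ≠ 0 := by
        intro h
        exact hcJ ((sub_eq_zero.1 h) ▸ hj)
      by_contra h
      have h2 : c - j ∈ J := by
        have := hcomp _ h1 h
        rwa [neg_sub] at this
      exact hcJJ (Finset.mem_add.2 ⟨c - j, h2, j, hj, by ring⟩)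
    have step2 : -c ∈ J := hcomp c hc0 hcJ
    have step3 : ∀ k : ℕ, -c - k • c ∈ J := by
      intro k
      induction k with
      | zero => simpa using step2
      | succ k ih =>
        have : -c - (k+1) • c = (-c - k • c) - c := by
          rw [succ_nsmul]; ring
        rw [this]
        exact step1 _ ih
    have hlast := step3 (2*m)
    have hz : -c - (2*m) • c = 0 := by
      have h1 : ((2*m+1 : ℕ) : ZMod (2*m+1)) = 0 := ZMod.natCast_self _
      have : -c - (2*m) • c = -(((2*m+1 : ℕ) : ZMod (2*m+1)) * c) := by
        push_cast
        rw [nsmul_eq_mul]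
        push_cast
        ring
      rw [this, h1, zero_mul, neg_zero]
    rw [hz] at hlast
    exact h0 hlast
  -- the set of missing nonzero elements
  set M : Finset (ZMod (2*m+1)) := Finset.univ \ insert 0 (J + J) with hM
  have hMsub : ∀ c ∈ M, c ≠ 0 ∧ c ∉ J + J := by
    intro c hc
    rw [hM, Finset.mem_sdiff, Finset.mem_insert] at hc
    push_neg at hc
    exact ⟨hc.2.1, hc.2.2⟩
  have huniq : ∀ c ∈ M, ∀ d ∈ M, c = d := by
    intro c hc d hd
    by_contra hne
    obtain ⟨hc0, hcJJ⟩ := hMsub c hc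
    obtain ⟨hd0, hdJJ⟩ := hMsub d hd
    have hcJ : c ∈ J := hmem c hc0 hcJJ
    have hdJ : d ∈ J := hmem d hd0 hdJJ
    have key : ∀ x y : ZMod (2*m+1), x ∈ J → y ∈ J → x ≠ y → y ∉ J + J → x - y ∈ J := by
      intro x y hx hy hxy hyJJ
      by_contra h
      have h1 : x - y ≠ 0 := sub_ne_zero.2 hxy
      have h2 : y - x ∈ J := by
        have := hcomp _ h1 h
        rwa [neg_sub] at this
      exact hyJJ (Finset.mem_add.2 ⟨x, hx, y - x, h2, by ring⟩)
    have hcd : c - d ∈ J := key c d hcJ hdJ hne hdJJ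
    have hdc : d - c ∈ J := key d c hdJ hcJ (Ne.symm hne) hcJJ
    have := hneg _ hcd
    rw [neg_sub] at this
    exact this hdc
  have hMcard : M.card ≤ 1 := by
    by_contra h
    push_neg at h
    obtain ⟨a, ha, b, hb, hab⟩ := Finset.one_lt_card.1 h
    exact hab (huniq a ha b hb)
  constructor
  · -- lower bound
    have hcover : Finset.univ ⊆ insert 0 (J + J) ∪ M := by
      intro x _
      rw [Finset.mem_union, hM, Finset.mem_sdiff]
      by_cases hx : x ∈ insert 0 (J + J)
      · exact Or.inl hx
      · exact Or.inr ⟨Finset.mem_univ x, hx⟩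
    have h1 : (2*m+1 : ℕ) ≤ (insert 0 (J + J)).card + M.card := by
      calc (2*m+1 : ℕ) = Finset.univ.card := by rw [Finset.card_univ, hfin]
        _ ≤ (insert 0 (J + J) ∪ M).card := Finset.card_le_card hcover
        _ ≤ (insert 0 (J + J)).card + M.card := Finset.card_union_le _ _
    have h2 : (insert 0 (J + J)).card ≤ (J + J).card + 1 := Finset.card_insert_le _ _
    omega
  · -- upper bound
    have hsub : J + J ⊆ Finset.univ.erase 0 := by
      intro x hx
      rw [Finset.mem_erase]
      exact ⟨fun h => hJJ0 (h ▸ hx), Finset.mem_univ x⟩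
    have := Finset.card_le_card hsub
    rw [Finset.card_erase_of_mem (Finset.mem_univ _), Finset.card_univ, hfin] at this
    omega
end

section
/- Let J be a symbol set in ℤ/(2m+1) and K a symbol set in ℤ/(2n+1), and let p be defined by 2p+1 = (2m+1)(2n+1). Let H ⊆ ℤ/(2p+1) be the subgroup of multiples of 2m+1, let L = (2m+1)·K ∪ (J′ + H) where J′ ⊆ ℤ/(2p+1) is a set of representatives lifting J (one representative j ∈ [1, 2m] for each element of J). Then L is a symbol set in ℤ/(2p+1): |L| = p, 0 ∉ L, and for each x ∈ L exactly one of x, −x lies in L. -/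
open Finset Pointwise

/-- Composition of circulant tournaments: with `2p+1 = (2m+1)(2n+1)`, `J` a
symbol set in `ℤ/(2m+1)` lifted to `J' ⊆ ℤ/(2p+1)` via representatives in
`[1, 2m]`, `K` a symbol set in `ℤ/(2n+1)`, `H` the set of multiples of
`2m+1`, the set `L = (2m+1)·K ∪ (J' + H)` is a symbol set in `ℤ/(2p+1)`:
`|L| = p`, `0 ∉ L`, and for each `x ∈ L` exactly one of `x, −x` lies in `L`. -/
theorem stmt7 (m n p : ℕ) (hm : 0 < m) (hn : 0 < n)
    (hp : 2*p+1 = (2*m+1)*(2*n+1))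
    (J : Finset (ZMod (2*m+1))) (hJcard : J.card = m)
    (hJ0 : (0 : ZMod (2*m+1)) ∉ J) (hJneg : ∀ j ∈ J, -j ∉ J)
    (K : Finset (ZMod (2*n+1))) (hKcard : K.card = n)
    (hK0 : (0 : ZMod (2*n+1)) ∉ K) (hKneg : ∀ k ∈ K, -k ∉ K)
    (J' : Finset (ZMod (2*p+1)))
    (hJ' : J' = J.image (fun j => ((j.val : ℕ) : ZMod (2*p+1))))
    (Hf : Finset (ZMod (2*p+1)))
    (hHf : Hf = (Finset.range (2*n+1)).image
      (fun i : ℕ => ((2*m+1 : ℕ) * i : ZMod (2*p+1))))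
    (L : Finset (ZMod (2*p+1)))
    (hL : L = K.image (fun k => ((2*m+1 : ℕ) * (k.val : ℕ) : ZMod (2*p+1)))
            ∪ (J' + Hf)) :
    L.card = p ∧ (0 : ZMod (2*p+1)) ∉ L ∧ ∀ x ∈ L, -x ∉ L := by
  subst hJ' hHf hL
  set A : Finset (ZMod (2*p+1)) :=
    K.image (fun k => ((2*m+1 : ℕ) * (k.val : ℕ) : ZMod (2*p+1))) with hA
  set B : Finset (ZMod (2*p+1)) :=
    (J.image (fun j => ((j.val : ℕ) : ZMod (2*p+1)))) +
      ((Finset.range (2*n+1)).image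
        (fun i : ℕ => ((2*m+1 : ℕ) * i : ZMod (2*p+1)))) with hB
  -- basic facts
  have hJne : ∀ j ∈ J, j.val ≠ 0 := by
    intro j hj h
    have : j = 0 := by
      have := ZMod.val_eq_zero j
      exact this.mp h
    exact hJ0 (this ▸ hj)
  have hKne : ∀ k ∈ K, k.val ≠ 0 := by
    intro k hk h
    have : k = 0 := (ZMod.val_eq_zero k).mp h
    exact hK0 (this ▸ hk)
  have hvc : ∀ t : ℕ, t < 2*p+1 → ((t : ZMod (2*p+1))).val = t :=
    fun t h => ZMod.val_cast_of_lt h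
  have hcv : ∀ x : ZMod (2*p+1), ((x.val : ℕ) : ZMod (2*p+1)) = x := by
    intro x; simp [ZMod.natCast_val, ZMod.cast_id]
  -- characterization of A
  have memA : ∀ x : ZMod (2*p+1), x ∈ A ↔
      (x.val % (2*m+1) = 0 ∧ ((x.val / (2*m+1) : ℕ) : ZMod (2*n+1)) ∈ K) := by
    intro x
    constructor
    · rw [hA, Finset.mem_image]
      rintro ⟨k, hk, rfl⟩
      have hklt : k.val < 2*n+1 := ZMod.val_lt k
      have hlt : (2*m+1) * k.val < 2*p+1 := by
        rw [hp]; exact mul_lt_mul_of_pos_left hklt (by omega)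
      have hv : (((2*m+1 : ℕ) * (k.val : ℕ) : ZMod (2*p+1))).val = (2*m+1) * k.val := by
        rw [← Nat.cast_mul]; exact hvc _ hlt
      rw [hv]
      constructor
      · simp [Nat.mul_mod_right]
      · rw [Nat.mul_div_cancel_left _ (by omega : 0 < 2*m+1)]
        simpa [ZMod.natCast_val, ZMod.cast_id] using hk
    · rintro ⟨h0, hk⟩
      rw [hA, Finset.mem_image]
      refine ⟨((x.val / (2*m+1) : ℕ) : ZMod (2*n+1)), hk, ?_⟩
      have hqlt : x.val / (2*m+1) < 2*n+1 := by
        apply Nat.div_lt_of_lt_mul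
        rw [← hp]; exact ZMod.val_lt x
      have hqv : (((x.val / (2*m+1) : ℕ) : ZMod (2*n+1))).val = x.val / (2*m+1) :=
        ZMod.val_cast_of_lt hqlt
      rw [hqv, ← Nat.cast_mul]
      have h2 : (2*m+1) * (x.val / (2*m+1)) = x.val := by
        have := Nat.div_add_mod x.val (2*m+1); omega
      rw [h2, hcv]
  -- characterization of B
  have memB : ∀ x : ZMod (2*p+1), x ∈ B ↔
      (((x.val % (2*m+1) : ℕ) : ZMod (2*m+1)) ∈ J) := by
    intro x
    constructor
    · rw [hB]
      rw [Finset.mem_add]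
      rintro ⟨a, ha, c, hc, rfl⟩
      rw [Finset.mem_image] at ha hc
      obtain ⟨j, hj, rfl⟩ := ha
      obtain ⟨i, hi, rfl⟩ := hc
      rw [Finset.mem_range] at hi
      have hjlt : j.val < 2*m+1 := ZMod.val_lt j
      have hsum : ((j.val : ℕ) : ZMod (2*p+1)) + ((2*m+1 : ℕ) * i : ZMod (2*p+1))
          = ((j.val + (2*m+1)*i : ℕ) : ZMod (2*p+1)) := by push_cast; ring
      rw [hsum]
      have hlt : j.val + (2*m+1)*i < 2*p+1 := by
        rw [hp]
        have h1 : (2*m+1)*i ≤ (2*m+1)*(2*n) := Nat.mul_le_mul (le_refl _) (by omega)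
        have h2 : (2*m+1)*(2*n+1) = (2*m+1)*(2*n) + (2*m+1) := by ring
        omega
      rw [hvc _ hlt, Nat.add_mul_mod_self_left, Nat.mod_eq_of_lt hjlt]
      simpa [ZMod.natCast_val, ZMod.cast_id] using hj
    · intro hmem
      rw [hB, Finset.mem_add]
      have htlt : x.val % (2*m+1) < 2*m+1 := Nat.mod_lt _ (by omega)
      refine ⟨((x.val % (2*m+1) : ℕ) : ZMod (2*p+1)), ?_,
        ((2*m+1 : ℕ) : ZMod (2*p+1)) * ((x.val / (2*m+1) : ℕ) : ZMod (2*p+1)), ?_, ?_⟩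
      · rw [Finset.mem_image]
        refine ⟨((x.val % (2*m+1) : ℕ) : ZMod (2*m+1)), hmem, ?_⟩
        rw [ZMod.val_cast_of_lt htlt]
      · rw [Finset.mem_image]
        refine ⟨x.val / (2*m+1), ?_, rfl⟩
        rw [Finset.mem_range]
        apply Nat.div_lt_of_lt_mul
        rw [← hp]; exact ZMod.val_lt x
      · have h3 : ((x.val % (2*m+1) : ℕ) : ZMod (2*p+1)) +
            ((2*m+1 : ℕ) : ZMod (2*p+1)) * ((x.val / (2*m+1) : ℕ) : ZMod (2*p+1))
            = ((x.val % (2*m+1) + (2*m+1) * (x.val / (2*m+1)) : ℕ) : ZMod (2*p+1)) := by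
          push_cast; ring
        rw [h3, Nat.mod_add_div, hcv]
  -- if x ∈ B then x.val % (2m+1) ≠ 0
  have hBne : ∀ x ∈ B, x.val % (2*m+1) ≠ 0 := by
    intro x hx h
    rw [memB x, h] at hx
    exact hJ0 (by simpa using hx)
  -- 0 ∉ L
  have h0A : (0 : ZMod (2*p+1)) ∉ A := by
    rw [memA]
    rintro ⟨-, hk⟩
    rw [ZMod.val_zero] at hk
    simp at hk
    exact hK0 hk
  have h0B : (0 : ZMod (2*p+1)) ∉ B := by
    intro h
    exact hBne 0 h (by simp)
  -- disjointness
  have hdisj : Disjoint A B := by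
    rw [Finset.disjoint_left]
    intro x hxA hxB
    exact hBne x hxB ((memA x).mp hxA).1
  -- decompositions
  have decompA : ∀ x : ZMod (2*p+1), x ∈ A →
      ∃ q, x.val = (2*m+1)*q ∧ q < 2*n+1 ∧ ((q : ℕ) : ZMod (2*n+1)) ∈ K := by
    intro x hx
    rw [memA] at hx
    refine ⟨x.val / (2*m+1), ?_, ?_, hx.2⟩
    · have h1 := hx.1
      have := Nat.div_add_mod x.val (2*m+1); omega
    · apply Nat.div_lt_of_lt_mul
      rw [← hp]; exact ZMod.val_lt x
  have decompB : ∀ x : ZMod (2*p+1), x ∈ B →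
      ∃ i t, x.val = (2*m+1)*i + t ∧ i < 2*n+1 ∧ 0 < t ∧ t < 2*m+1 ∧
        ((t : ℕ) : ZMod (2*m+1)) ∈ J := by
    intro x hx
    have htne : x.val % (2*m+1) ≠ 0 := hBne x hx
    rw [memB] at hx
    have htlt : x.val % (2*m+1) < 2*m+1 := Nat.mod_lt _ (by omega)
    refine ⟨x.val / (2*m+1), x.val % (2*m+1), ?_, ?_, by omega, htlt, hx⟩
    · have := Nat.div_add_mod x.val (2*m+1); omega
    · apply Nat.div_lt_of_lt_mul
      rw [← hp]; exact ZMod.val_lt x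
  refine ⟨?_, ?_, ?_⟩
  · -- cardinality
    rw [Finset.card_union_of_disjoint hdisj]
    have hcardA : A.card = n := by
      rw [hA, Finset.card_image_of_injOn, hKcard]
      intro a ha b hb hab
      simp only [] at hab
      have h1 : ∀ k : ZMod (2*n+1), (2*m+1) * k.val < 2*p+1 := by
        intro k; rw [hp]; exact mul_lt_mul_of_pos_left (ZMod.val_lt k) (by omega)
      have h5 : (2*m+1) * a.val = (2*m+1) * b.val := by
        have ha' := hvc _ (h1 a)
        have hb' := hvc _ (h1 b)
        rw [← Nat.cast_mul, ← Nat.cast_mul] at hab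
        rw [← ha', ← hb', hab]
      have h6 : a.val = b.val := Nat.eq_of_mul_eq_mul_left (by omega) h5
      exact ZMod.val_injective _ h6
    have hcardB : B.card = m * (2*n+1) := by
      have hBeq : B = (J ×ˢ Finset.range (2*n+1)).image
          (fun q : ZMod (2*m+1) × ℕ => ((q.1.val + (2*m+1)*q.2 : ℕ) : ZMod (2*p+1))) := by
        ext x
        rw [hB, Finset.mem_add, Finset.mem_image]
        constructor
        · rintro ⟨a, ha, c, hc, rfl⟩
          rw [Finset.mem_image] at ha hc
          obtain ⟨j, hj, rfl⟩ := ha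
          obtain ⟨i, hi, rfl⟩ := hc
          refine ⟨(j, i), Finset.mem_product.mpr ⟨hj, hi⟩, ?_⟩
          push_cast; ring
        · rintro ⟨⟨j, i⟩, hq, rfl⟩
          rw [Finset.mem_product] at hq
          refine ⟨((j.val : ℕ) : ZMod (2*p+1)), Finset.mem_image_of_mem _ hq.1,
            ((2*m+1 : ℕ) * i : ZMod (2*p+1)), Finset.mem_image_of_mem _ hq.2, ?_⟩
          push_cast; ring
      rw [hBeq, Finset.card_image_of_injOn, Finset.card_product, hJcard, Finset.card_range]
      rintro ⟨j1, i1⟩ hq1 ⟨j2, i2⟩ hq2 heq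
      simp only [Finset.mem_coe, Finset.mem_product, Finset.mem_range] at hq1 hq2
      simp only [] at heq
      have hlt : ∀ (j : ZMod (2*m+1)) (i : ℕ), i < 2*n+1 → j.val + (2*m+1)*i < 2*p+1 := by
        intro j i hi
        rw [hp]
        have h1 : (2*m+1)*i ≤ (2*m+1)*(2*n) := Nat.mul_le_mul (le_refl _) (by omega)
        have h2 : (2*m+1)*(2*n+1) = (2*m+1)*(2*n) + (2*m+1) := by ring
        have := ZMod.val_lt j
        omega
      have h1 := hvc _ (hlt j1 i1 hq1.2)
      have h2 := hvc _ (hlt j2 i2 hq2.2)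
      have heq' : j1.val + (2*m+1)*i1 = j2.val + (2*m+1)*i2 := by
        rw [← h1, ← h2, heq]
      have hj1 := ZMod.val_lt j1
      have hj2 := ZMod.val_lt j2
      have hmod : j1.val = j2.val := by
        have := congrArg (· % (2*m+1)) heq'
        simpa [Nat.add_mul_mod_self_left, Nat.mod_eq_of_lt hj1, Nat.mod_eq_of_lt hj2] using this
      have h3 : (2*m+1)*i1 = (2*m+1)*i2 := by omega
      have hieq : i1 = i2 := Nat.eq_of_mul_eq_mul_left (by omega) h3
      have := ZMod.val_injective _ hmod
      simp [this, hieq]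
    rw [hcardA, hcardB]
    have hp' : p = 2*m*n + m + n := by
      have h4 : (2*m+1)*(2*n+1) = 4*(m*n)+2*m+2*n+1 := by ring
      have h5 : 2*m*n = 2*(m*n) := by ring
      omega
    rw [hp']
    ring
  · rw [Finset.mem_union]
    rintro (h | h)
    · exact h0A h
    · exact h0B h
  · -- negation
    intro x hx
    rw [Finset.mem_union] at hx
    have hxne : x ≠ 0 := by
      rintro rfl
      rcases hx with h | h
      · exact h0A h
      · exact h0B h
    have hnegval : (-x).val = (2*p+1) - x.val := by
      rw [ZMod.neg_val, if_neg hxne]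
    have hxlt : x.val < 2*p+1 := ZMod.val_lt x
    rw [Finset.mem_union]
    rintro (hneg | hneg)
    · -- -x ∈ A
      obtain ⟨q', hq'val, hq'lt, hq'K⟩ := decompA _ hneg
      rw [hnegval] at hq'val
      rcases hx with hxA | hxB
      · obtain ⟨q, hqval, hqlt, hqK⟩ := decompA _ hxA
        have hsum : (2*m+1)*(q+q') = (2*m+1)*(2*n+1) := by
          have h1 : (2*m+1)*(q+q') = (2*m+1)*q + (2*m+1)*q' := by ring
          omega
        have hqq : q + q' = 2*n+1 := Nat.eq_of_mul_eq_mul_left (by omega) hsum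
        have hcast : ((q' : ℕ) : ZMod (2*n+1)) = -((q : ℕ) : ZMod (2*n+1)) := by
          have h0 : ((q : ℕ) : ZMod (2*n+1)) + ((q' : ℕ) : ZMod (2*n+1)) = 0 := by
            rw [← Nat.cast_add, hqq]
            simp
          linear_combination h0
        rw [hcast] at hq'K
        exact hKneg _ hqK hq'K
      · obtain ⟨i, t, hxval, hilt, htpos, htlt, htJ⟩ := decompB _ hxB
        have h2' : (2*m+1)*(q'+i) + t = (2*m+1)*(2*n+1) := by
          have hh : (2*m+1)*(q'+i) = (2*m+1)*q' + (2*m+1)*i := by ring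
          omega
        have h5 : t = 0 := by
          have := congrArg (· % (2*m+1)) h2'
          simpa [Nat.mul_add_mod, Nat.mul_mod_right, Nat.mod_eq_of_lt htlt] using this
        omega
    · -- -x ∈ B
      obtain ⟨i', t', hq'val, hi'lt, ht'pos, ht'lt, ht'J⟩ := decompB _ hneg
      rw [hnegval] at hq'val
      rcases hx with hxA | hxB
      · obtain ⟨q, hqval, hqlt, hqK⟩ := decompA _ hxA
        have h2' : (2*m+1)*(i'+q) + t' = (2*m+1)*(2*n+1) := by
          have hh : (2*m+1)*(i'+q) = (2*m+1)*i' + (2*m+1)*q := by ring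
          omega
        have h5 : t' = 0 := by
          have := congrArg (· % (2*m+1)) h2'
          simpa [Nat.mul_add_mod, Nat.mul_mod_right, Nat.mod_eq_of_lt ht'lt] using this
        omega
      · obtain ⟨i, t, hxval, hilt, htpos, htlt, htJ⟩ := decompB _ hxB
        have h2' : (2*m+1)*(i'+i) + (t' + t) = (2*m+1)*(2*n+1) := by
          have hh : (2*m+1)*(i'+i) = (2*m+1)*i' + (2*m+1)*i := by ring
          omega
        have h7 : (t' + t) % (2*m+1) = 0 := by
          have := congrArg (· % (2*m+1)) h2'
          simpa [Nat.mul_add_mod, Nat.mul_mod_right] using this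
        have h6 : t' + t = 2*m+1 := by
          obtain ⟨d, hd⟩ := Nat.dvd_of_mod_eq_zero h7
          have hd0 : d ≠ 0 := by rintro rfl; omega
          have hd2 : d < 2 := by
            by_contra hge
            push_neg at hge
            have h8 : (2*m+1)*2 ≤ (2*m+1)*d := Nat.mul_le_mul (le_refl _) hge
            omega
          have hd1 : d = 1 := by omega
          rw [hd1] at hd
          omega
        have hcast : ((t' : ℕ) : ZMod (2*m+1)) = -((t : ℕ) : ZMod (2*m+1)) := by
          have h0 : ((t : ℕ) : ZMod (2*m+1)) + ((t' : ℕ) : ZMod (2*m+1)) = 0 := by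
            rw [← Nat.cast_add]
            have h9 : t + t' = 2*m+1 := by omega
            rw [h9]
            simp
          linear_combination h0
        rw [hcast] at ht'J
        exact hJneg _ htJ ht'J
end

section
/- Let L ⊆ ℤ/(2p+1) be a symbol set (|L| = p, 0 ∉ L, exactly one of x, −x in L) that is quasi-periodic with respect to a nontrivial subgroup H of order 2n+1, say L = C′ ∪ C″ disjoint with C′ + H = C′ and C″ ⊊ c + H. Then: (a) H ∩ C′ = ∅; (b) the coset containing C″ is H itself, i.e., C″ ⊆ H; (c) writing C′ as a union of s cosets of H and |C″| = t, one has s(2n+1) + t = p; and (d) if 2p+1 = (2m+1)(2n+1) then s = m and t = n. -/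
open Finset

private lemma aux_dvd {G : Type*} [AddCommGroup G] [DecidableEq G] (Hf : Finset G)
    (h0 : (0:G) ∈ Hf) (hcl : ∀ a ∈ Hf, ∀ b ∈ Hf, a - b ∈ Hf) :
    ∀ k (C : Finset G), C.card = k →
      (∀ x ∈ C, ∀ h ∈ Hf, x + h ∈ C) →
      Hf.card ∣ C.card := by
  intro k
  induction k using Nat.strong_induction_on with
  | _ k ih =>
    intro C hk hC
    rcases C.eq_empty_or_nonempty with rfl | ⟨x, hx⟩
    · simp
    · set K := Hf.image (x + ·) with hK
      have hKcard : K.card = Hf.card :=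
        Finset.card_image_of_injective _ (add_right_injective x)
      have hmemK : ∀ y, y ∈ K ↔ ∃ h ∈ Hf, x + h = y := by
        intro y; rw [hK]; exact Finset.mem_image
      have hKC : K ⊆ C := by
        intro y hy
        obtain ⟨h, hh, rfl⟩ := (hmemK y).1 hy
        exact hC x hx h hh
      have hxK : x ∈ K := (hmemK x).2 ⟨0, h0, add_zero x⟩
      have hsub : ∀ y ∈ C \ K, ∀ h ∈ Hf, y + h ∈ C \ K := by
        intro y hy h hh
        rw [Finset.mem_sdiff] at hy ⊢
        refine ⟨hC y hy.1 h hh, fun hyk => hy.2 ?_⟩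
        obtain ⟨a, ha, hxa⟩ := (hmemK _).1 hyk
        exact (hmemK y).2 ⟨a - h, hcl a ha h hh, by rw [show x + (a - h) = (x + a) - h by abel, hxa, add_sub_cancel_right]⟩
      have hcard : (C \ K).card = C.card - K.card := Finset.card_sdiff_of_subset hKC
      have hK1 : 1 ≤ K.card := Finset.card_pos.2 ⟨x, hxK⟩
      have hle : K.card ≤ C.card := Finset.card_le_card hKC
      have hlt : (C \ K).card < k := by omega
      have hdvd : Hf.card ∣ (C \ K).card := ih _ hlt (C \ K) rfl hsub
      have hsum : C.card = (C \ K).card + K.card := by omega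
      rw [hsum, hKcard]
      exact Nat.dvd_add hdvd dvd_rfl

/-- Let `L ⊆ ℤ/(2p+1)` be a symbol set that is quasi-periodic with respect to
a subgroup `H` of order `2n+1`: `L = C′ ∪ C″` disjoint, `C′ + H = C′`, and
`C″ ⊊ c + H` with `c ∈ C″`. If `2p+1 = (2m+1)(2n+1)`, then: (a) `H ∩ C′ = ∅`;
(b) `C″ ⊆ H`; (c) `C′` is a union of `s` cosets of `H` with
`s(2n+1) + |C″| = p`; and (d) `s = m` and `|C″| = n`. -/
theorem stmt9 (p m n : ℕ) (hm : 0 < m) (hn : 0 < n)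
    (hp : 2*p+1 = (2*m+1)*(2*n+1))
    (L : Finset (ZMod (2*p+1))) (hLcard : L.card = p)
    (hL0 : (0 : ZMod (2*p+1)) ∉ L) (hLneg : ∀ x ∈ L, -x ∉ L)
    (H : AddSubgroup (ZMod (2*p+1))) (hH : Nat.card H = 2*n+1)
    (C' C'' : Finset (ZMod (2*p+1)))
    (hunion : L = C' ∪ C'') (hdisj : Disjoint C' C'')
    (hper : ∀ g ∈ H, C'.image (· + g) = C')
    (c : ZMod (2*p+1)) (hc : c ∈ C'')
    (hcoset : ∀ x ∈ C'', x - c ∈ H) (hproper : C''.card < 2*n+1) :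
    (∀ x ∈ C', x ∉ H) ∧
    (∀ x ∈ C'', x ∈ H) ∧
    ∃ s : ℕ, C'.card = s*(2*n+1) ∧ s*(2*n+1) + C''.card = p ∧
      s = m ∧ C''.card = n := by
  classical
  have hp1 : 1 ≤ p := by nlinarith
  set Hf : Finset (ZMod (2*p+1)) := Finset.univ.filter (· ∈ H) with hHfdef
  have hmemHf : ∀ x : ZMod (2*p+1), x ∈ Hf ↔ x ∈ H := by
    intro x; simp [hHfdef]
  have hHfcard : Hf.card = 2*n+1 := by
    rw [← hH]
    rw [Nat.card_eq_fintype_card]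
    rw [hHfdef]
    rw [← Fintype.card_subtype]
  -- invariance of C'
  have hinv : ∀ x ∈ C', ∀ h ∈ H, x + h ∈ C' := by
    intro x hx h hh
    rw [← hper h hh]
    exact Finset.mem_image_of_mem _ hx
  -- halving : a + a ∈ H → a ∈ H
  have hhalf : ∀ a : ZMod (2*p+1), a + a ∈ H → a ∈ H := by
    intro a haa
    have key : (p+1) • (a+a) = a := by
      calc (p+1) • (a+a) = ((p+1 : ℕ) : ZMod (2*p+1)) * (a+a) := nsmul_eq_mul _ _
        _ = ((2*p+1 : ℕ) : ZMod (2*p+1)) * a + a := by push_cast; ring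
        _ = a := by rw [ZMod.natCast_self]; ring
    exact key ▸ H.nsmul_mem haa (p+1)
  -- (a)
  have ha : ∀ x ∈ C', x ∉ H := by
    intro x hx hxH
    have h0 : x + (-x) ∈ C' := hinv x hx (-x) (H.neg_mem hxH)
    simp only [add_neg_cancel] at h0
    exact hL0 (hunion ▸ Finset.mem_union_left _ h0)
  -- totality
  have htot : ∀ x : ZMod (2*p+1), x ≠ 0 → x ∈ L ∨ -x ∈ L := by
    intro x hx0
    by_contra hcon
    push_neg at hcon
    set M := L ∪ L.image (fun z => -z) with hM
    have hdisjM : Disjoint L (L.image (fun z => -z)) := by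
      rw [Finset.disjoint_left]
      intro y hy hy'
      obtain ⟨z, hz, hzy⟩ := Finset.mem_image.1 hy'
      exact hLneg z hz (by rwa [← hzy] at hy)
    have hMcard : M.card = 2 * p := by
      rw [hM, Finset.card_union_of_disjoint hdisjM,
        Finset.card_image_of_injective _ neg_injective, hLcard]
      omega
    have hxM : x ∉ M := by
      rw [hM, Finset.mem_union]
      rintro (h | h)
      · exact hcon.1 h
      · obtain ⟨z, hz, hzy⟩ := Finset.mem_image.1 h
        exact hcon.2 (by rw [← hzy]; simpa using hz)
    have hMsub2 : M ⊆ Finset.univ.erase 0 \ {x} := by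
      intro y hy
      refine Finset.mem_sdiff.2 ⟨Finset.mem_erase.2 ⟨?_, Finset.mem_univ _⟩, ?_⟩
      · rintro rfl
        rcases Finset.mem_union.1 hy with h | h
        · exact hL0 h
        · obtain ⟨z, hz, hzy⟩ := Finset.mem_image.1 h
          exact hL0 (by rw [show z = 0 by simpa using hzy] at hz; exact hz)
      · simp only [Finset.mem_singleton]
        rintro rfl; exact hxM hy
    have hcard2 : (Finset.univ.erase 0 \ ({x} : Finset (ZMod (2*p+1)))).card = 2*p - 1 := by
      rw [Finset.card_sdiff_of_subset]
      · rw [Finset.card_erase_of_mem (Finset.mem_univ _), Finset.card_singleton]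
        have hcardG : Fintype.card (ZMod (2*p+1)) = 2*p+1 := ZMod.card _
        rw [Finset.card_univ, hcardG]
        omega
      · intro y hy
        rw [Finset.mem_singleton] at hy; subst hy
        exact Finset.mem_erase.2 ⟨hx0, Finset.mem_univ _⟩
    have := Finset.card_le_card hMsub2
    omega
  -- (b) : c ∈ H
  have hcH : c ∈ H := by
    by_contra hcH
    by_cases hnegc : -c ∈ C'
    · exact hLneg c (hunion ▸ Finset.mem_union_right _ hc)
        (hunion ▸ Finset.mem_union_left _ hnegc)
    · have hnotsurj : ∃ h ∈ H, c + h ∉ C'' := by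
        by_contra hcon2
        push_neg at hcon2
        have hsub : Hf ⊆ C''.image (fun x => x - c) := by
          intro h hh
          rw [hmemHf] at hh
          exact Finset.mem_image.2 ⟨c + h, hcon2 h hh, by ring⟩
        have h1 := Finset.card_le_card hsub
        have h2 : (C''.image (fun x => x - c)).card ≤ C''.card := Finset.card_image_le
        omega
      obtain ⟨h, hhH, hxC''⟩ := hnotsurj
      have hx0 : c + h ≠ 0 := by
        intro h0
        exact hcH ((eq_neg_of_add_eq_zero_left h0) ▸ H.neg_mem hhH)
      have hxL : c + h ∉ L := by
        rw [hunion, Finset.mem_union]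
        rintro (hxc | hxc)
        · have hcC' : c ∈ C' := by
            have := hinv _ hxc (-h) (H.neg_mem hhH)
            simpa using this
          exact Finset.disjoint_left.1 hdisj hcC' hc
        · exact hxC'' hxc
      have hnxL : -(c + h) ∉ L := by
        rw [hunion, Finset.mem_union]
        rintro (hxc | hxc)
        · have hcC' : -c ∈ C' := by
            have := hinv _ hxc h hhH
            simpa using this
          exact hnegc hcC'
        · have h1 : -(c+h) - c ∈ H := hcoset _ hxc
          have h2 : (-(c+h) - c) + h ∈ H := H.add_mem h1 hhH
          have h3 : -(c + c) ∈ H := by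
            have he : (-(c+h) - c) + h = -(c+c) := by ring
            rwa [he] at h2
          exact hcH (hhalf c (by simpa using H.neg_mem h3))
      rcases htot _ hx0 with h | h
      · exact hxL h
      · exact hnxL h
  have hb : ∀ x ∈ C'', x ∈ H := by
    intro x hx
    have := H.add_mem (hcoset x hx) hcH
    simpa using this
  -- C''.card = n
  have hC''0 : ∀ x ∈ C'', x ≠ 0 := by
    intro x hx h0
    exact hL0 (h0 ▸ (hunion ▸ Finset.mem_union_right _ hx))
  have hset : Hf.erase 0 = C'' ∪ C''.image (fun z => -z) := by
    apply Finset.Subset.antisymm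
    · intro x hx
      obtain ⟨hx0, hxH⟩ := Finset.mem_erase.1 hx
      rw [hmemHf] at hxH
      rcases htot x hx0 with h | h
      · rw [hunion, Finset.mem_union] at h
        rcases h with h | h
        · exact absurd hxH (ha x h)
        · exact Finset.mem_union_left _ h
      · rw [hunion, Finset.mem_union] at h
        rcases h with h | h
        · exact absurd (H.neg_mem hxH) (ha _ h)
        · exact Finset.mem_union_right _
            (Finset.mem_image.2 ⟨-x, h, by simp⟩)
    · intro x hx
      rcases Finset.mem_union.1 hx with h | h
      · exact Finset.mem_erase.2 ⟨hC''0 x h, (hmemHf x).2 (hb x h)⟩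
      · obtain ⟨z, hz, hzy⟩ := Finset.mem_image.1 h
        refine Finset.mem_erase.2 ⟨?_, (hmemHf x).2 ?_⟩
        · rintro rfl
          exact hC''0 z hz (by simpa using hzy)
        · exact hzy ▸ H.neg_mem (hb z hz)
  have hdisj2 : Disjoint C'' (C''.image (fun z => -z)) := by
    rw [Finset.disjoint_left]
    intro y hy hy'
    obtain ⟨z, hz, hzy⟩ := Finset.mem_image.1 hy'
    exact hLneg z (hunion ▸ Finset.mem_union_right _ hz)
      (hzy ▸ (hunion ▸ Finset.mem_union_right _ hy))
  have htn : C''.card = n := by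
    have h1 : (Hf.erase 0).card = 2*n := by
      rw [Finset.card_erase_of_mem ((hmemHf 0).2 H.zero_mem), hHfcard]
      omega
    rw [hset, Finset.card_union_of_disjoint hdisj2,
      Finset.card_image_of_injective _ neg_injective] at h1
    omega
  -- divisibility and s
  have hcl : ∀ a ∈ Hf, ∀ b ∈ Hf, a - b ∈ Hf := by
    intro a haH b hbH
    exact (hmemHf _).2 (H.sub_mem ((hmemHf a).1 haH) ((hmemHf b).1 hbH))
  have hinv' : ∀ x ∈ C', ∀ h ∈ Hf, x + h ∈ C' := by
    intro x hx h hh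
    exact hinv x hx h ((hmemHf h).1 hh)
  have hdvd : (2*n+1) ∣ C'.card := by
    have := aux_dvd Hf ((hmemHf 0).2 H.zero_mem) hcl C'.card C' rfl hinv'
    rwa [hHfcard] at this
  obtain ⟨s, hs0⟩ := hdvd
  have hs : C'.card = s * (2*n+1) := by rw [hs0, Nat.mul_comm]
  have hLsplit : C'.card + C''.card = p := by
    rw [← Finset.card_union_of_disjoint hdisj, ← hunion, hLcard]
  refine ⟨ha, hb, s, hs, ?_, ?_, htn⟩
  · omega
  · have hq : 2*p+1 = 4*(m*n)+2*m+2*n+1 := by rw [hp]; ring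
    have hb2 : m*(2*n+1) = 2*(m*n)+m := by ring
    have hsm : s*(2*n+1) = m*(2*n+1) := by
      set q := m*n with hqq
      set a := s*(2*n+1) with haa
      set b := m*(2*n+1) with hbb
      omega
    exact Nat.eq_of_mul_eq_mul_right (by omega) hsm
end

section
/- Every arc of a regular tournament is contained in a directed 3-cycle. In particular, in a circulant tournament C_{2n+1}(J), for every arc (u, v) there exists a vertex w with (v, w) and (w, u) arcs; equivalently, for every j ∈ J there exist j₁, j₂ ∈ J with j + j₁ + j₂ = 0 in ℤ/(2n+1). -/
open Finset Pointwise

theorem aux_tournament (V : Type) [Fintype V] (T : V → V → Prop)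
    (hirr : ∀ x, ¬ T x x)
    (hasym : ∀ x y, x ≠ y → (T x y ↔ ¬ T y x))
    (hreg : ∃ k : ℕ, ∀ x : V, Nat.card {y : V // T x y} = k)
    (u v : V) (huv : T u v) : ∃ w : V, T v w ∧ T w u := by
  classical
  obtain ⟨k, hk⟩ := hreg
  by_contra h
  push_neg at h
  have hne : u ≠ v := fun e => hirr u (e ▸ huv)
  have hcard : ∀ x : V, (Finset.univ.filter (T x)).card = k := by
    intro x
    have := hk x
    rwa [Nat.card_eq_fintype_card, Fintype.card_subtype] at this
  have hsub : insert v (Finset.univ.filter (T v)) ⊆ Finset.univ.filter (T u) := by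
    intro w hw
    simp only [Finset.mem_insert, Finset.mem_filter, Finset.mem_univ, true_and] at hw ⊢
    rcases hw with rfl | hw
    · exact huv
    · have hwu : w ≠ u := fun e => ((hasym u v hne).mp huv) (e ▸ hw)
      exact (hasym u w (Ne.symm hwu)).mpr (h w hw)
  have hv : v ∉ Finset.univ.filter (T v) := by simp [hirr v]
  have hle := Finset.card_le_card hsub
  rw [Finset.card_insert_of_notMem hv, hcard v, hcard u] at hle
  omega

/-- Alspach's theorem: every arc of a regular tournament lies in a directed
3-cycle. In particular, in a circulant tournament `C_{2n+1}(J)`, for every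
`j ∈ J` there exist `j₁, j₂ ∈ J` with `j + j₁ + j₂ = 0`. -/
theorem stmt17 :
    (∀ (V : Type) [Fintype V] (T : V → V → Prop),
      (∀ x, ¬ T x x) →
      (∀ x y, x ≠ y → (T x y ↔ ¬ T y x)) →
      (∃ k : ℕ, ∀ x : V, Nat.card {y : V // T x y} = k) →
      ∀ u v : V, T u v → ∃ w : V, T v w ∧ T w u) ∧
    (∀ (n : ℕ) (J : Finset (ZMod (2*n+1))), 0 < n → J.card = n →
      (0 : ZMod (2*n+1)) ∉ J → (∀ j ∈ J, -j ∉ J) →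
      ∀ j ∈ J, ∃ j₁ ∈ J, ∃ j₂ ∈ J, j + j₁ + j₂ = 0) := by
  refine ⟨aux_tournament, ?_⟩
  intro n J hn hcard h0 hneg j hj
  classical
  have hcompl : ∀ d : ZMod (2*n+1), d ≠ 0 → d ∉ J → -d ∈ J := by
    intro d hd hdJ
    have hdisj : Disjoint J (J.image (fun x => -x)) := by
      rw [Finset.disjoint_left]
      intro a haJ ha
      obtain ⟨b, hbJ, hb⟩ := Finset.mem_image.mp ha
      have hna : -a ∈ J := by rw [← hb, neg_neg]; exact hbJ
      exact hneg a haJ hna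
    have himg : (J.image (fun x => -x)).card = n := by
      rw [Finset.card_image_of_injective _ neg_injective, hcard]
    have hsub : J ∪ J.image (fun x => -x) ⊆ Finset.univ.erase 0 := by
      intro a ha
      rcases Finset.mem_union.mp ha with haJ | haI
      · exact Finset.mem_erase.mpr ⟨fun e => h0 (e ▸ haJ), Finset.mem_univ _⟩
      · obtain ⟨b, hbJ, hb⟩ := Finset.mem_image.mp haI
        refine Finset.mem_erase.mpr ⟨?_, Finset.mem_univ _⟩
        rintro rfl
        have : b = 0 := by rwa [neg_eq_zero] at hb
        exact h0 (this ▸ hbJ)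
    have hucard : (J ∪ J.image (fun x => -x)).card = 2 * n := by
      rw [Finset.card_union_of_disjoint hdisj, hcard, himg]; ring
    have hecard : (Finset.univ.erase (0 : ZMod (2*n+1))).card = 2 * n := by
      rw [Finset.card_erase_of_mem (Finset.mem_univ _), Finset.card_univ, ZMod.card]; omega
    have heq : J ∪ J.image (fun x => -x) = Finset.univ.erase 0 :=
      Finset.eq_of_subset_of_card_le hsub (by omega)
    have hdmem : d ∈ J ∪ J.image (fun x => -x) := by
      rw [heq]; exact Finset.mem_erase.mpr ⟨hd, Finset.mem_univ _⟩
    rcases Finset.mem_union.mp hdmem with hdJ' | hdI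
    · exact absurd hdJ' hdJ
    · obtain ⟨b, hbJ, hb⟩ := Finset.mem_image.mp hdI
      rwa [← hb, neg_neg]
  have key := aux_tournament (ZMod (2*n+1)) (fun x y => y - x ∈ J)
    (by intro x; simpa using h0)
    (by
      intro x y hxy
      constructor
      · intro hT hT'
        have : -(y - x) ∈ J := by rwa [neg_sub]
        exact hneg _ hT this
      · intro hT'
        have hne : x - y ≠ 0 := sub_ne_zero.mpr hxy
        have := hcompl (x - y) hne hT'
        rwa [neg_sub] at this)
    (by
      refine ⟨n, fun x => ?_⟩
      have e : {y : ZMod (2*n+1) // y - x ∈ J} ≃ {z : ZMod (2*n+1) // z ∈ J} :=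
        Equiv.subtypeEquiv (Equiv.subRight x) (fun y => Iff.rfl)
      rw [Nat.card_congr e, Nat.card_eq_fintype_card, Fintype.card_coe, hcard])
    0 j (by simpa using hj)
  obtain ⟨w, h1, h2⟩ := key
  exact ⟨w - j, h1, 0 - w, h2, by ring⟩
end

section
/- Let J be a symbol set in ℤ/(2n+1) such that J is aperiodic. Then there is no partition ℤ/(2n+1) = {0} ∪ B ∪ C into three nonempty disjoint sets such that −J ⊆ B and C ⊆ J and C is nonempty; indeed, if −J ⊆ B and ∅ ≠ C ⊆ J, then choosing j ∈ C, since −j ∈ J + J there exist j', j'' ∈ J with j + j' ≡ −j'' giving a directed triangle 0 → j → j+j' → 0 with j ∈ C, j + j' ∈ −J ⊆ B, which is 3-colored by the partition {0} | B | C, contradicting the externally C₃-free property. -/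
open Finset Pointwise

/-- Let `J` be an aperiodic symbol set in `ℤ/(2n+1)`. Then no partition
`{0} | B | C` of `ℤ/(2n+1)` into nonempty classes with `−J ⊆ B` and
`∅ ≠ C ⊆ J` is externally `C₃`-free: there is a directed triangle
`0 → j → b → 0` with `j ∈ C` and `b ∈ B`, which is 3-colored by the
partition. -/
theorem stmt18 (n : ℕ) (hn : 0 < n) (J : Finset (ZMod (2*n+1)))
    (hcard : J.card = n) (h0 : (0 : ZMod (2*n+1)) ∉ J)
    (hneg : ∀ j ∈ J, -j ∉ J)
    (haper : ∀ g : ZMod (2*n+1), J.image (· + g) = J → g = 0)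
    (B C : Finset (ZMod (2*n+1)))
    (hBne : B.Nonempty) (hCne : C.Nonempty) (hdisj : Disjoint B C)
    (h0B : (0 : ZMod (2*n+1)) ∉ B) (h0C : (0 : ZMod (2*n+1)) ∉ C)
    (hcover : insert (0 : ZMod (2*n+1)) (B ∪ C) = Finset.univ)
    (hJB : (-J : Finset (ZMod (2*n+1))) ⊆ B) (hCJ : C ⊆ J) :
    ∃ j ∈ C, ∃ b ∈ B, j ∈ J ∧ b - j ∈ J ∧ -b ∈ J := by
  haveI : NeZero (2*n+1) := ⟨Nat.succ_ne_zero _⟩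
  -- half-set property: for x ≠ 0, x ∉ J → -x ∈ J
  have hhalf : ∀ x : ZMod (2*n+1), x ≠ 0 → x ∉ J → -x ∈ J := by
    intro x hx hxJ
    by_contra hnx
    -- J ∪ -J ∪ {0} misses x, but should have card 2n+1
    have hd : Disjoint J (-J) := by
      rw [Finset.disjoint_left]
      intro a ha hb
      rw [Finset.mem_neg] at hb
      obtain ⟨b, hb, rfl⟩ := hb
      exact hneg b hb ha
    have h0n : (0 : ZMod (2*n+1)) ∉ J ∪ -J := by
      simp only [Finset.mem_union, Finset.mem_neg]
      rintro (h | ⟨b, hb, hb0⟩)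
      · exact h0 h
      · exact h0 (by rwa [neg_eq_zero.mp hb0] at hb)
    have hcardU : (insert (0 : ZMod (2*n+1)) (J ∪ -J)).card = 2*n+1 := by
      rw [Finset.card_insert_of_notMem h0n, Finset.card_union_of_disjoint hd,
        Finset.card_neg, hcard]
      ring
    have hsub : insert (0 : ZMod (2*n+1)) (J ∪ -J) ⊆ Finset.univ := Finset.subset_univ _
    have := Finset.eq_of_subset_of_card_le hsub (by
      rw [hcardU, Finset.card_univ, ZMod.card])
    have hxmem : x ∈ insert (0 : ZMod (2*n+1)) (J ∪ -J) := this ▸ Finset.mem_univ x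
    simp only [Finset.mem_insert, Finset.mem_union, Finset.mem_neg] at hxmem
    rcases hxmem with h | h | ⟨b, hb, rfl⟩
    · exact hx h
    · exact hxJ h
    · exact hnx (by simpa using hb)
  -- Alspach: for j ∈ J, ∃ j' j'' ∈ J, j' + j'' = -j
  have halspach : ∀ j ∈ J, ∃ j' ∈ J, ∃ j'' ∈ J, j' + j'' = -j := by
    intro j hj
    by_contra hcon
    push_neg at hcon
    have hclosed : ∀ a ∈ J, a + j ∈ J := by
      intro a ha
      have h1 : -j - a ∉ J := fun h => hcon a ha (-j - a) h (by ring)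
      have h2 : -j - a ≠ 0 := by
        intro h
        have : a = -j := by linear_combination -h
        exact hneg j hj (this ▸ ha)
      have := hhalf _ h2 h1
      simpa [neg_sub, sub_neg_eq_add, add_comm] using this
    have himg : J.image (· + j) = J := by
      apply Finset.eq_of_subset_of_card_le
      · intro x hx
        simp only [Finset.mem_image] at hx
        obtain ⟨a, ha, rfl⟩ := hx
        exact hclosed a ha
      · rw [Finset.card_image_of_injective _ (add_left_injective j)]
    exact h0 ((haper j himg) ▸ hj)
  obtain ⟨j, hjC⟩ := hCne
  have hjJ := hCJ hjC
  obtain ⟨j', hj', j'', hj'', hsum⟩ := halspach j hjJ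
  refine ⟨j, hjC, j + j', ?_, hjJ, by simpa using hj', ?_⟩
  · apply hJB
    rw [Finset.mem_neg]
    exact ⟨j'', hj'', by linear_combination -hsum⟩
  · have : -(j + j') = j'' := by linear_combination -hsum
    rwa [this]
end
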